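/- Let (b_1, b_2) and (c_1, c_2) be pairs of positive integers with b_1 < b_2, c_1 < c_2. Define A(b_1,b_2;c_1,c_2) = 1 if b_2 = c_2 and b_1 ≤ c_1, else 0. Define B_1(b_1,b_2;c_1,c_2) = ∑_{(d_1,d_2)∈S_2} A(d_1,d_2;c_1,c_2) {d_1 d_2; b_1 b_2} (1-t)^{(c_1-d_1)+(c_2-d_2)} where {d_1 d_2; b_1 b_2} = [d_1,b_1][d_2,b_2] − [d_2,b_1][d_1,b_2]. Then B_1(b_1,b_2;c_1,c_2) = [c_2,b_2] if b_1 ≤ c_1 ≤ b_2 − 1, and B_1(b_1,b_2;c_1,c_2) = 0 if c_1 < b_1 or c_1 ≥ b_2. -/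

import Mathlib

open Polynomial Finset

/-- Bracket symbol: `t` if `c > b`, `1` if `c = b`, `0` if `c < b` (here `t = X ∈ ℚ[t]`). -/
noncomputable def brk (c b : ℕ) : Polynomial ℚ :=
  if b < c then X else if c = b then 1 else 0

/-- Antisymmetrized tuple bracket `{c; b} = ∑_σ sign(σ) ∏ᵢ [c_{σ(i)}, bᵢ]`. -/
noncomputable def braceT {l : ℕ} (c b : Fin l → ℕ) : Polynomial ℚ :=
  ∑ σ : Equiv.Perm (Fin l), (Equiv.Perm.sign σ : ℤ) • ∏ i, brk (c (σ i)) (b i)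

/-- The recursively defined coefficient `A(b; c)`:  for `l = 2`, `A = 1` iff `b₂ = c₂` and
`b₁ ≤ c₁`; for `l > 2`, `A(b;c) = 0` if the last entries differ, and otherwise it is the sum
of `A` on the truncations over all strictly increasing `(l-1)`-tuples `c'` of positive
integers with `c' ≤ (c₁, …, c_{l-1})` componentwise. -/
def Acoef : (l : ℕ) → (Fin l → ℕ) → (Fin l → ℕ) → ℕ
  | 0, _, _ => 0
  | 1, _, _ => 0
  | 2, b, c => if b 1 = c 1 ∧ b 0 ≤ c 0 then 1 else 0
  | l + 3, b, c =>
    if b (Fin.last (l + 2)) = c (Fin.last (l + 2)) then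
      ∑ c' ∈ (Finset.Icc (fun _ => 1) (fun j : Fin (l + 2) => c j.castSucc)).filter
          (fun c' => ∀ i j : Fin (l + 2), i < j → c' i < c' j),
        Acoef (l + 2) (fun j => b j.castSucc) c'
    else 0

/-- Finite index set covering all pairs `(d₁,d₂) ∈ S₂` giving nonzero terms. -/
def S2box (b2 c2 : ℕ) : Finset (ℕ × ℕ) :=
  ((Finset.range (b2 + c2 + 2)) ×ˢ (Finset.range (b2 + c2 + 2))).filter
    (fun d => 1 ≤ d.1 ∧ d.1 < d.2)


/-! Only the pairs `(d₁, c₂)` with `d₁ ≤ c₁` contribute, so `B₁` splits as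
`[c₂,b₂] G(b₁) - [c₂,b₁] G(b₂)` with `G(b) = ∑_{d=1}^{c₁} [d,b] (1-t)^{c₁-d}`.
The sums `G` telescope: `G_{c+1}(b) = (1-t) G_c(b) + [c+1,b]`, so `G(b) = 1` once `b ≤ c₁`
(the term `[b,b] = 1` starts it and every later step adds `t` to `(1-t)`), and `G(b) = 0` otherwise. -/

lemma brk_of_lt {b c : ℕ} (h : b < c) : brk c b = X := by
  simp [brk, h]

lemma brk_self (b : ℕ) : brk b b = 1 := by
  simp [brk]

lemma brk_of_gt {b c : ℕ} (h : c < b) : brk c b = 0 := by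
  simp [brk, h.not_gt, h.ne]

lemma braceT_pair (a b x y : ℕ) :
    braceT ![a, b] ![x, y] = brk a x * brk b y - brk b x * brk a y := by
  have huniv : (univ : Finset (Equiv.Perm (Fin 2))) = {1, Equiv.swap 0 1} := by decide
  rw [braceT, huniv, sum_pair (by decide)]
  simp [Fin.prod_univ_two, sub_eq_add_neg, mul_comm]

lemma Acoef_pair (d1 d2 c1 c2 : ℕ) :
    (Acoef 2 ![d1, d2] ![c1, c2] : Polynomial ℚ) = if d2 = c2 ∧ d1 ≤ c1 then 1 else 0 := by
  rw [Acoef]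
  split_ifs <;> simp_all

lemma sum_Icc_brk_mul_one_sub_X_pow {b : ℕ} (hb : 1 ≤ b) (c : ℕ) :
    ∑ d ∈ Icc 1 c, brk d b * (1 - X : Polynomial ℚ) ^ (c - d) = if b ≤ c then 1 else 0 := by
  induction c with
  | zero => rw [Icc_eq_empty_of_lt zero_lt_one, sum_empty, if_neg (by omega)]
  | succ c ih =>
    have hshift : ∑ d ∈ Icc 1 c, brk d b * (1 - X : Polynomial ℚ) ^ (c + 1 - d)
        = (1 - X) * ∑ d ∈ Icc 1 c, brk d b * (1 - X : Polynomial ℚ) ^ (c - d) := by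
      rw [mul_sum]
      refine sum_congr rfl fun d hd => ?_
      rw [show c + 1 - d = c - d + 1 by grind, pow_succ]
      ring
    rw [sum_Icc_succ_top (by omega), hshift, ih, Nat.sub_self, pow_zero, mul_one]
    rcases lt_trichotomy b (c + 1) with h | rfl | h
    · rw [brk_of_lt h, if_pos (by omega), if_pos h.le]
      ring
    · simp [brk_self]
    · rw [brk_of_gt h, if_neg (by omega), if_neg (by omega)]
      ring

lemma sum_S2box_Acoef_braceT (b1 b2 c1 c2 : ℕ) (hc : c1 < c2) :
    ∑ d ∈ S2box b2 c2,
        (Acoef 2 ![d.1, d.2] ![c1, c2] : Polynomial ℚ) * braceT ![d.1, d.2] ![b1, b2] *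
          (1 - X) ^ ((c1 - d.1) + (c2 - d.2))
      = brk c2 b2 * ∑ d ∈ Icc 1 c1, brk d b1 * (1 - X : Polynomial ℚ) ^ (c1 - d)
        - brk c2 b1 * ∑ d ∈ Icc 1 c1, brk d b2 * (1 - X : Polynomial ℚ) ^ (c1 - d) := by
  have hsupport : (Icc 1 c1).map (Function.Embedding.sectL ℕ c2) ⊆ S2box b2 c2 := by
    intro d hd
    simp only [mem_map, mem_Icc, Function.Embedding.sectL_apply] at hd
    obtain ⟨d1, hd1, rfl⟩ := hd
    simp only [S2box, mem_filter, mem_product, mem_range]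
    omega
  rw [← sum_subset hsupport, sum_map, mul_sum, mul_sum, ← sum_sub_distrib]
  · refine sum_congr rfl fun d hd => ?_
    rw [Function.Embedding.sectL_apply, Acoef_pair, if_pos ⟨rfl, (mem_Icc.1 hd).2⟩, braceT_pair,
      Nat.sub_self, add_zero]
    ring
  · intro d hbox hd
    have hA : (Acoef 2 ![d.1, d.2] ![c1, c2] : Polynomial ℚ) = 0 := by
      rw [Acoef_pair, if_neg]
      rintro ⟨h2, h1⟩
      simp only [S2box, mem_filter] at hbox
      exact hd (mem_map.2 ⟨d.1, mem_Icc.2 ⟨hbox.2.1, h1⟩, Prod.ext rfl h2.symm⟩)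
    rw [hA, zero_mul, zero_mul]

theorem B1_pair_general (b1 b2 c1 c2 : ℕ) (hb1 : 1 ≤ b1) (hb : b1 < b2)
    (hc : c1 < c2) :
    ((b1 ≤ c1 → c1 ≤ b2 - 1 →
      (∑ d ∈ S2box b2 c2,
          (Acoef 2 ![d.1, d.2] ![c1, c2] : Polynomial ℚ) * braceT ![d.1, d.2] ![b1, b2] *
            (1 - X) ^ ((c1 - d.1) + (c2 - d.2))) = brk c2 b2) ∧
    (c1 < b1 ∨ b2 ≤ c1 →
      (∑ d ∈ S2box b2 c2,
          (Acoef 2 ![d.1, d.2] ![c1, c2] : Polynomial ℚ) * braceT ![d.1, d.2] ![b1, b2] *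
            (1 - X) ^ ((c1 - d.1) + (c2 - d.2))) = 0)) := by
  rw [sum_S2box_Acoef_braceT b1 b2 c1 c2 hc, sum_Icc_brk_mul_one_sub_X_pow hb1,
    sum_Icc_brk_mul_one_sub_X_pow (hb1.trans hb.le)]
  refine ⟨fun h1 h2 => ?_, fun h => ?_⟩
  · rw [if_pos h1, if_neg (by omega)]
    ring
  · rcases h with h | h
    · rw [if_neg (by omega), if_neg (by omega)]
      ring
    · rw [if_pos (by omega), if_pos h, brk_of_lt (by omega : b2 < c2),
        brk_of_lt (by omega : b1 < c2)]
      ring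

/-- Lemma 3.5 for `B₁`: with
`B₁(b₁,b₂;c₁,c₂) = ∑_{(d₁,d₂)∈S₂} A(d₁,d₂;c₁,c₂) {d₁ d₂; b₁ b₂} (1-t)^{(c₁-d₁)+(c₂-d₂)}`
(all terms outside the finite box `S2box` vanish), one has `B₁ = [c₂,b₂]` if
`b₁ ≤ c₁ ≤ b₂ - 1`, and `B₁ = 0` if `c₁ < b₁` or `c₁ ≥ b₂`. -/
theorem B1_pair (b1 b2 c1 c2 : ℕ) (hb1 : 1 ≤ b1) (hb : b1 < b2)
    (hc1 : 1 ≤ c1) (hc : c1 < c2) :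
    ((b1 ≤ c1 → c1 ≤ b2 - 1 →
      (∑ d ∈ S2box b2 c2,
          (Acoef 2 ![d.1, d.2] ![c1, c2] : Polynomial ℚ) * braceT ![d.1, d.2] ![b1, b2] *
            (1 - X) ^ ((c1 - d.1) + (c2 - d.2))) = brk c2 b2) ∧
    (c1 < b1 ∨ b2 ≤ c1 →
      (∑ d ∈ S2box b2 c2,
          (Acoef 2 ![d.1, d.2] ![c1, c2] : Polynomial ℚ) * braceT ![d.1, d.2] ![b1, b2] *
            (1 - X) ^ ((c1 - d.1) + (c2 - d.2))) = 0)) :=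
  B1_pair_general b1 b2 c1 c2 hb1 hb hc
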